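/- arXiv:1907.11209 — 4 statements merged into one kernel-verified Lean document; each statement's English description precedes it below -/
import Mathlib

section
/- If x is an extreme point of the polyhedron P(G) = {x ∈ ℝ^V : x_u + x_v ≥ 1 for every edge {u,v} of G, x ≥ 0}, then x_v ∈ {0, 1/2, 1} for every vertex v. -/
open Finset

def IsVC {V : Type*} (G : SimpleGraph V) (S : Set V) : Prop :=
  ∀ ⦃u v⦄, G.Adj u v → u ∈ S ∨ v ∈ S

def IsIndep {V : Type*} (G : SimpleGraph V) (S : Set V) : Prop :=
  ∀ ⦃u⦄, u ∈ S → ∀ ⦃v⦄, v ∈ S → ¬ G.Adj u v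

def lpPoly {V : Type*} (G : SimpleGraph V) : Set (V → ℝ) :=
  {x | (∀ v, 0 ≤ x v) ∧ ∀ ⦃u v⦄, G.Adj u v → 1 ≤ x u + x v}

/-- Optimal value of the fractional coloring LP of the subgraph of `G` induced on `s`:
weights on independent sets contained in `s` covering every vertex of `s`. -/
noncomputable def fracChromOn {V : Type*} [Fintype V] [DecidableEq V]
    (G : SimpleGraph V) (s : Set V) : ℝ :=
  sInf {t | ∃ y : Finset V → ℝ, (∀ U, 0 ≤ y U) ∧
    (∀ U, y U ≠ 0 → IsIndep G ↑U ∧ ↑U ⊆ s) ∧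
    (∀ v ∈ s, 1 ≤ ∑ U : Finset V, if v ∈ U then y U else 0) ∧
    t = ∑ U : Finset V, y U}

/-- Fractional chromatic number of `G`. -/
noncomputable def fracChrom {V : Type*} [Fintype V] [DecidableEq V]
    (G : SimpleGraph V) : ℝ :=
  fracChromOn G Set.univ

/-- Optimal value of the vertex cover LP relaxation under cost `c`. -/
noncomputable def lpVal {V : Type*} [Fintype V] (G : SimpleGraph V) (c : V → ℝ) : ℝ :=
  sInf {t | ∃ x ∈ lpPoly G, t = ∑ v, c v * x v}

/-- Minimum cost of an integral vertex cover under cost `c`. -/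
noncomputable def ipVal {V : Type*} [Fintype V] [DecidableEq V]
    (G : SimpleGraph V) (c : V → ℝ) : ℝ :=
  sInf {t | ∃ S : Finset V, IsVC G ↑S ∧ t = ∑ v ∈ S, c v}

/-- Integrality gap of the vertex cover LP relaxation. -/
noncomputable def gap {V : Type*} [Fintype V] [DecidableEq V] (G : SimpleGraph V) : ℝ :=
  sSup {r | ∃ c : V → ℝ, (∀ v, 0 ≤ c v) ∧ 0 < lpVal G c ∧ r = ipVal G c / lpVal G c}

/-!
If some coordinate of `x ∈ P(G)` avoids `{0, 1/2, 1}`, move every such coordinate by `±ε`: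
towards `1/2` if it lies below `1/2`, away from it otherwise. A tight edge `x u + x v = 1`
has `x v = 1 - x u`, so its two coordinates move in opposite directions and the edge stays
tight; every other constraint is slack and survives a small enough `ε`, since there are
finitely many. Both perturbed points lie in `P(G)` and `x` is their midpoint, so `x` is not
extreme.
-/

open Filter Topology

noncomputable def halfIntegralDir (a : ℝ) : ℝ :=
  if a = 0 ∨ a = 1 then 0 else Real.sign (a - 1 / 2)

lemma halfIntegralDir_eq_zero_iff {a : ℝ} :
    halfIntegralDir a = 0 ↔ a = 0 ∨ a = 1 / 2 ∨ a = 1 := by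
  unfold halfIntegralDir
  split_ifs with h
  · tauto
  · rw [Real.sign_eq_zero_iff, sub_eq_zero]
    tauto

lemma halfIntegralDir_one_sub (a : ℝ) : halfIntegralDir (1 - a) = -halfIntegralDir a := by
  have hswap : (1 - a = 0 ∨ 1 - a = 1) ↔ (a = 0 ∨ a = 1) := by
    constructor <;> rintro (h | h) <;> first | (left; linarith) | (right; linarith)
  have hsign : Real.sign (1 - a - 1 / 2) = -Real.sign (a - 1 / 2) := by
    rw [← Real.sign_neg]; ring_nf
  simp only [halfIntegralDir, hswap, hsign]
  split_ifs <;> simp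

lemma eventually_nonneg_add_mul {a c : ℝ} (ha : 0 ≤ a) (hc : a = 0 → c = 0) :
    ∀ᶠ ε in 𝓝 0, 0 ≤ a + ε * c := by
  rcases ha.eq_or_lt with rfl | ha
  · simp [hc rfl]
  · have hcont : Tendsto (fun ε : ℝ => a + ε * c) (𝓝 0) (𝓝 a) := by
      simpa using (by fun_prop : Continuous fun ε : ℝ => a + ε * c).tendsto 0
    exact (hcont.eventually (lt_mem_nhds ha)).mono fun _ => le_of_lt

lemma Set.eq_zero_of_add_mem_of_sub_mem_of_mem_extremePoints {𝕜 E : Type*} [Field 𝕜]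
    [LinearOrder 𝕜] [IsStrictOrderedRing 𝕜] [AddCommGroup E] [Module 𝕜 E] {S : Set E} {x d : E}
    (hx : x ∈ S.extremePoints 𝕜) (hadd : x + d ∈ S) (hsub : x - d ∈ S) : d = 0 := by
  simpa using hx.2 hadd hsub (mem_openSegment_add_sub (𝕜 := 𝕜) x d)

lemma eventually_add_smul_halfIntegralDir_mem_lpPoly {V : Type*} [Finite V]
    {G : SimpleGraph V} {x : V → ℝ} (hx : x ∈ lpPoly G) :
    ∀ᶠ ε in 𝓝 (0 : ℝ), x + ε • (fun v => halfIntegralDir (x v)) ∈ lpPoly G := by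
  obtain ⟨hnonneg, hedge⟩ := hx
  have hvertex : ∀ v, ∀ᶠ ε in 𝓝 (0 : ℝ), 0 ≤ x v + ε * halfIntegralDir (x v) := fun v =>
    eventually_nonneg_add_mul (hnonneg v) fun h => halfIntegralDir_eq_zero_iff.2 (.inl h)
  have hedges : ∀ u v, ∀ᶠ ε in 𝓝 (0 : ℝ), G.Adj u v →
      1 ≤ x u + ε * halfIntegralDir (x u) + (x v + ε * halfIntegralDir (x v)) := by
    intro u v
    refine eventually_imp_distrib_left.2 fun huv => ?_
    have htight : x u + x v - 1 = 0 →
        halfIntegralDir (x u) + halfIntegralDir (x v) = 0 := fun h => by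
      rw [show x v = 1 - x u by linarith, halfIntegralDir_one_sub, add_neg_cancel]
    filter_upwards [eventually_nonneg_add_mul (sub_nonneg.2 (hedge huv)) htight] with ε hε
    linarith
  filter_upwards [eventually_all.2 hvertex,
    eventually_all.2 fun u => eventually_all.2 (hedges u)] with ε hε₁ hε₂
  exact ⟨hε₁, fun u v huv => hε₂ u v huv⟩

/-- Nemhauser–Trotter half-integrality: every extreme point of the vertex cover LP
polyhedron has all coordinates in {0, 1/2, 1}. -/
theorem stmt0 {V : Type*} [Fintype V] (G : SimpleGraph V)
    (x : V → ℝ) (hx : x ∈ Set.extremePoints ℝ (lpPoly G)) :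
    ∀ v, x v = 0 ∨ x v = 1/2 ∨ x v = 1 := by
  set d : V → ℝ := fun v => halfIntegralDir (x v)
  have hperturb := eventually_add_smul_halfIntegralDir_mem_lpPoly hx.1
  have hsmall : ∀ᶠ ε in 𝓝[≠] (0 : ℝ),
      (x + ε • d ∈ lpPoly G ∧ x + (-ε) • d ∈ lpPoly G) ∧ ε ≠ 0 :=
    ((hperturb.and (continuous_neg.tendsto' 0 0 neg_zero |>.eventually hperturb)).filter_mono
      nhdsWithin_le_nhds).and self_mem_nhdsWithin
  obtain ⟨ε, ⟨hadd, hsub⟩, hε⟩ := hsmall.exists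
  have hd : ε • d = 0 := Set.eq_zero_of_add_mem_of_sub_mem_of_mem_extremePoints hx hadd
    (by rwa [neg_smul, ← sub_eq_add_neg] at hsub)
  intro v
  exact halfIntegralDir_eq_zero_iff.1 (congrFun ((smul_eq_zero.1 hd).resolve_left hε) v)
end

section
/- Let G be a finite graph with at least one edge, let x* be a half-integral point of P(G) with level sets V_0, V_{1/2}, V_1, let H = G[V_{1/2}], and let y* be an optimal fractional coloring of H with Σ_U y*_U = χ^f(H). Setting λ_U = y*_U/χ^f(H), the coordinatewise inequality (2 − 2/χ^f(G))·x* ≥ Σ_{U independent in H} λ_U · 1_{(V_{1/2}\U) ∪ V_1} holds. -/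
open Finset

/-!
The three level sets are handled separately. On `V_0` both sides vanish. On `V_1` every cover
`(V_{1/2} \ U) ∪ V_1` contains the vertex, so the left side is `χ^f(H)/χ^f(H) ≤ 1`, while
`2 - 2/χ^f(G) ≥ 1` because an edge forces `χ^f(G) ≥ 2`. On `V_{1/2}` the vertex is missed by the
classes `U ∋ v`, which carry weight at least `1`, so the left side is at most
`1 - 1/χ^f(H) ≤ 1 - 1/χ^f(G)`, using that `χ^f` is monotone under taking induced subgraphs.
-/

lemma IsIndep.mono {V : Type*} {G : SimpleGraph V} {S T : Set V} (hT : IsIndep G T)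
    (hST : S ⊆ T) : IsIndep G S :=
  fun _ hu _ hv => hT (hST hu) (hST hv)

section FractionalColoring

variable {V : Type*} [Fintype V] [DecidableEq V] {G : SimpleGraph V}

variable (G) in
def IsFracColoringOn (s : Set V) (y : Finset V → ℝ) : Prop :=
  (∀ U, 0 ≤ y U) ∧ (∀ U, y U ≠ 0 → IsIndep G ↑U ∧ ↑U ⊆ s) ∧
    ∀ v ∈ s, 1 ≤ ∑ U : Finset V, if v ∈ U then y U else 0

lemma fracChromOn_le_sum {s : Set V} {y : Finset V → ℝ} (hy : IsFracColoringOn G s y) :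
    fracChromOn G s ≤ ∑ U, y U :=
  csInf_le ⟨0, by rintro t ⟨z, hz0, -, -, rfl⟩; exact sum_nonneg fun U _ => hz0 U⟩
    ⟨y, hy.1, hy.2.1, hy.2.2, rfl⟩

lemma le_fracChromOn {s : Set V} {a : ℝ} (hne : ∃ y, IsFracColoringOn G s y)
    (h : ∀ y, IsFracColoringOn G s y → a ≤ ∑ U, y U) : a ≤ fracChromOn G s := by
  obtain ⟨y, hy⟩ := hne
  refine le_csInf ⟨_, y, hy.1, hy.2.1, hy.2.2, rfl⟩ ?_
  rintro t ⟨z, hz0, hzsupp, hzcov, rfl⟩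
  exact h z ⟨hz0, hzsupp, hzcov⟩

open Classical in
lemma isFracColoringOn_singletons (s : Set V) :
    IsFracColoringOn G s fun U => if ∃ v ∈ s, U = {v} then 1 else 0 := by
  refine ⟨fun U => ite_nonneg zero_le_one le_rfl, fun U hU => ?_, fun v hv => ?_⟩
  · obtain ⟨v, hv, rfl⟩ : ∃ v ∈ s, U = {v} := by by_contra h; exact hU (if_neg h)
    refine ⟨fun a ha b hb => ?_, by simpa using hv⟩
    simp only [coe_singleton, Set.mem_singleton_iff] at ha hb
    subst ha hb
    exact G.irrefl
  · have hsingle := single_le_sum (s := univ) (a := {v})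
      (f := fun U : Finset V => if v ∈ U then (if ∃ w ∈ s, U = {w} then (1 : ℝ) else 0) else 0)
      (fun U _ => by split_ifs <;> norm_num) (mem_univ _)
    simpa [hv] using hsingle

lemma two_le_fracChromOn {s : Set V} {u v : V} (hu : u ∈ s) (hv : v ∈ s) (huv : G.Adj u v) :
    2 ≤ fracChromOn G s := by
  refine le_fracChromOn ⟨_, isFracColoringOn_singletons s⟩ fun y ⟨hy0, hysupp, hycov⟩ => ?_
  have hedge : ∀ U : Finset V,
      (if u ∈ U then y U else 0) + (if v ∈ U then y U else 0) ≤ y U := by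
    intro U
    by_cases hyU : y U = 0
    · simp [hyU]
    · have hind := (hysupp U hyU).1
      split_ifs with hu' hv'
      · exact absurd huv (hind hu' hv')
      all_goals linarith [hy0 U]
  calc (2 : ℝ) ≤ (∑ U : Finset V, if u ∈ U then y U else 0)
        + ∑ U : Finset V, if v ∈ U then y U else 0 := by linarith [hycov u hu, hycov v hv]
    _ ≤ ∑ U, y U := by rw [← sum_add_distrib]; exact sum_le_sum fun U _ => hedge U

lemma two_le_fracChrom (hE : ∃ u v, G.Adj u v) : 2 ≤ fracChrom G := by
  obtain ⟨u, v, huv⟩ := hE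
  exact two_le_fracChromOn (Set.mem_univ u) (Set.mem_univ v) huv

lemma IsFracColoringOn.restrict {s t : Set V} [DecidablePred (· ∈ s)] (hst : s ⊆ t)
    {y : Finset V → ℝ} (hy : IsFracColoringOn G t y) :
    IsFracColoringOn G s fun U => ∑ W with W.filter (· ∈ s) = U, y W := by
  obtain ⟨hy0, hysupp, hycov⟩ := hy
  refine ⟨fun U => sum_nonneg fun W _ => hy0 W, fun U hU => ?_, fun v hv => ?_⟩
  · obtain ⟨W, hW, hyW⟩ := exists_ne_zero_of_sum_ne_zero hU
    obtain rfl := (mem_filter.1 hW).2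
    refine ⟨(hysupp W hyW).1.mono (coe_subset.2 (filter_subset _ _)), fun a ha => ?_⟩
    simp only [coe_filter, Set.mem_ofPred_eq] at ha
    exact ha.2
  · have hfiber : ∀ U : Finset V,
        (if v ∈ U then ∑ W with W.filter (· ∈ s) = U, y W else 0)
          = ∑ W with W.filter (· ∈ s) = U, if v ∈ W then y W else 0 := by
      intro U
      split_ifs with hvU
      · refine sum_congr rfl fun W hW => ?_
        rw [← (mem_filter.1 hW).2, mem_filter] at hvU
        rw [if_pos hvU.1]
      · refine (sum_eq_zero fun W hW => ?_).symm
        rw [← (mem_filter.1 hW).2, mem_filter] at hvU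
        rw [if_neg fun hvW => hvU ⟨hvW, hv⟩]
    simp only [hfiber, sum_fiberwise]
    exact hycov v (hst hv)

lemma fracChromOn_mono {s t : Set V} (hst : s ⊆ t) : fracChromOn G s ≤ fracChromOn G t := by
  classical
  refine le_fracChromOn ⟨_, isFracColoringOn_singletons t⟩ fun y hy => ?_
  calc fracChromOn G s ≤ ∑ U, ∑ W with W.filter (· ∈ s) = U, y W :=
        fracChromOn_le_sum (hy.restrict hst)
    _ = ∑ U, y U := sum_fiberwise _ _ _

lemma fracChromOn_le_fracChrom (s : Set V) : fracChromOn G s ≤ fracChrom G :=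
  fracChromOn_mono (Set.subset_univ s)

end FractionalColoring

lemma sum_ite_div_sum_le_one_sub {ι : Type*} [Fintype ι] {p : ι → Prop} [DecidablePred p]
    {y : ι → ℝ} {b : ℝ} (hy0 : ∀ i, 0 ≤ y i) (hp : 1 ≤ ∑ i, if p i then y i else 0)
    (hb : ∑ i, y i ≤ b) :
    (∑ i, if p i then 0 else y i) / ∑ i, y i ≤ 1 - 1 / b := by
  have hp_le : (∑ i, if p i then y i else 0) ≤ ∑ i, y i :=
    sum_le_sum fun i _ => by split_ifs <;> simp [hy0 i]
  have hpos : 0 < ∑ i, y i := by linarith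
  have hsplit : (∑ i, if p i then 0 else y i) = ∑ i, y i - ∑ i, if p i then y i else 0 := by
    rw [← sum_sub_distrib]
    exact sum_congr rfl fun i _ => by split_ifs <;> ring
  rw [hsplit, sub_div, div_self hpos.ne']
  have : 1 / b ≤ 1 / ∑ i, y i := one_div_le_one_div_of_le hpos hb
  calc 1 - (∑ i, if p i then y i else 0) / ∑ i, y i ≤ 1 - 1 / ∑ i, y i := by gcongr
    _ ≤ 1 - 1 / b := by linarith

theorem stmt4_general {V : Type*} [Fintype V] [DecidableEq V] (G : SimpleGraph V)
    (hE : ∃ u v, G.Adj u v)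
    (x : V → ℝ)
    (hhalf : ∀ v, x v = 0 ∨ x v = 1/2 ∨ x v = 1)
    (y : Finset V → ℝ) (hy0 : ∀ U, 0 ≤ y U)
    (hycover : ∀ v ∈ {v | x v = 1/2}, 1 ≤ ∑ U : Finset V, if v ∈ U then y U else 0)
    (hyopt : ∑ U : Finset V, y U = fracChromOn G {v | x v = 1/2}) :
    ∀ v, ∑ U : Finset V,
        (y U / fracChromOn G {v | x v = 1/2}) *
          Set.indicator (({v | x v = 1/2} \ ↑U) ∪ {v | x v = 1}) (fun _ => (1 : ℝ)) v
      ≤ (2 - 2 / fracChrom G) * x v := by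
  intro v
  have hχG : 2 ≤ fracChrom G := two_le_fracChrom hE
  have hχHG : ∑ U, y U ≤ fracChrom G := hyopt ▸ fracChromOn_le_fracChrom _
  simp only [div_mul_eq_mul_div, ← sum_div, Set.indicator, Set.mem_union, Set.mem_sdiff,
    Set.mem_ofPred_eq, mem_coe, ← hyopt]
  rcases hhalf v with hv | hv | hv
  · simp [hv]
  · have hne : (1 / 2 : ℝ) ≠ 1 := by norm_num
    simp only [hv, true_and, hne, or_false, mul_ite, ite_not, mul_one, mul_zero]
    calc _ ≤ 1 - 1 / fracChrom G := sum_ite_div_sum_le_one_sub hy0 (hycover v hv) hχHG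
      _ = (2 - 2 / fracChrom G) * (1 / 2) := by ring
  · have : 2 / fracChrom G ≤ 1 := by rw [div_le_one] <;> linarith
    simp only [hv, or_true, if_true, mul_one]
    linarith [div_self_le_one (∑ U, y U)]

/-- Key coordinatewise domination inequality: the convex combination of the indicator
vectors of the vertex covers `(V_{1/2} \ U) ∪ V_1`, with weights `y U / χ^f(H)` coming
from an optimal fractional coloring `y` of `H = G[V_{1/2}]`, is at most
`(2 - 2/χ^f(G)) · x` coordinatewise. -/
theorem stmt4 {V : Type*} [Fintype V] [DecidableEq V] (G : SimpleGraph V)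
    (hE : ∃ u v, G.Adj u v)
    (x : V → ℝ) (hx : x ∈ lpPoly G)
    (hhalf : ∀ v, x v = 0 ∨ x v = 1/2 ∨ x v = 1)
    (y : Finset V → ℝ) (hy0 : ∀ U, 0 ≤ y U)
    (hysupp : ∀ U, y U ≠ 0 → IsIndep G ↑U ∧ (↑U : Set V) ⊆ {v | x v = 1/2})
    (hycover : ∀ v ∈ {v | x v = 1/2}, 1 ≤ ∑ U : Finset V, if v ∈ U then y U else 0)
    (hyopt : ∑ U : Finset V, y U = fracChromOn G {v | x v = 1/2}) :
    ∀ v, ∑ U : Finset V,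
        (y U / fracChromOn G {v | x v = 1/2}) *
          Set.indicator (({v | x v = 1/2} \ ↑U) ∪ {v | x v = 1}) (fun _ => (1 : ℝ)) v
      ≤ (2 - 2 / fracChrom G) * x v :=
  stmt4_general G hE x hhalf y hy0 hycover hyopt
end

section
/- For every finite graph G with at least one edge and every nonnegative cost function c on V, the minimum cost of an (integral) vertex cover is at most (2 − 2/χ^f(G)) times the optimal value of the LP relaxation min{c^T x : x ∈ P(G)}. -/
open Finset

/-! Given a fractional colouring `y` of total weight `s` and a feasible `x ≤ 1`, choose an
independent set `U` with probability `y U / s` and a threshold `t` uniformly in `(0, 1/2]`, and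
round `x` up on the vertices `v ∉ U` with `t ≤ x v` and on the vertices `v ∈ U` with
`1 - t < x v`. Since `U` is independent this is always a vertex cover, and since every vertex
lies in `U` with probability at least `1/s`, it contains `v` with probability at most
`(2 - 2/s) x v`. Hence some such cover costs at most `(2 - 2/s) c·x`; letting `s` decrease to
`χ^f(G)` gives the bound. -/

open MeasureTheory

lemma Finset.exists_ne_zero_le_of_sum_mul_le {ι : Type*} {s : Finset ι} {w a : ι → ℝ}
    {B : ℝ} (hw : ∀ i ∈ s, 0 ≤ w i) (hpos : 0 < ∑ i ∈ s, w i)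
    (h : ∑ i ∈ s, w i * a i ≤ (∑ i ∈ s, w i) * B) :
    ∃ i ∈ s, w i ≠ 0 ∧ a i ≤ B := by
  by_contra! hlt
  obtain ⟨j, hj, hwj⟩ : ∃ j ∈ s, 0 < w j :=
    exists_lt_of_sum_lt (by simpa using hpos)
  have : (∑ i ∈ s, w i) * B < ∑ i ∈ s, w i * a i := by
    rw [sum_mul]
    refine sum_lt_sum (fun i hi => ?_) ⟨j, hj, by nlinarith [hlt j hj hwj.ne']⟩
    rcases (hw i hi).eq_or_lt with h0 | hpos
    · simp [← h0]
    · nlinarith [hlt i hi hpos.ne']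
  linarith

lemma sub_mul_min_add_mul_max_le {a p s : ℝ} (ha0 : 0 ≤ a) (ha1 : a ≤ 1) (hp : 1 ≤ p)
    (hs : 2 ≤ s) :
    (s - p) * min (1 / 2) a + p * max (a - 1 / 2) 0 ≤ (s - 1) * a := by
  rcases le_total a (1 / 2) with h | h
  · rw [min_eq_right h, max_eq_right (by linarith)]
    nlinarith
  · rw [min_eq_left h, max_eq_left (by linarith)]
    nlinarith

section

variable {V : Type*} {G : SimpleGraph V}

lemma min_one_mem_lpPoly {x : V → ℝ} (hx : x ∈ lpPoly G) :
    (fun v => min (x v) 1) ∈ lpPoly G := by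
  refine ⟨fun v => le_min (hx.1 v) zero_le_one, fun u v huv => ?_⟩
  have := hx.2 huv
  rcases min_cases (x u) 1 with ⟨hu, -⟩ | ⟨hu, -⟩ <;>
    rcases min_cases (x v) 1 with ⟨hv, -⟩ | ⟨hv, -⟩ <;>
    simp only [hu, hv] <;> linarith [hx.1 u, hx.1 v]

variable [DecidableEq V]

def roundingWindow (x : V → ℝ) (U : Finset V) (v : V) : Set ℝ :=
  if v ∈ U then Set.Ioi (1 - x v) else Set.Iic (x v)

lemma measurableSet_roundingWindow (x : V → ℝ) (U : Finset V) (v : V) :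
    MeasurableSet (roundingWindow x U v) := by
  unfold roundingWindow; split_ifs <;> measurability

lemma volume_real_Ioc_inter_roundingWindow {x : V → ℝ} (U : Finset V) {v : V}
    (hx0 : 0 ≤ x v) (hx1 : x v ≤ 1) :
    volume.real (Set.Ioc 0 (1 / 2) ∩ roundingWindow x U v) =
      if v ∈ U then max (x v - 1 / 2) 0 else min (1 / 2) (x v) := by
  unfold roundingWindow
  split_ifs
  · rw [Set.Ioc_inter_Ioi, Real.volume_real_Ioc,
      max_eq_right (by linarith : (0 : ℝ) ≤ 1 - x v)]
    ring_nf
  · rw [Set.Ioc_inter_Iic, Real.volume_real_Ioc, sub_zero, max_eq_left (by positivity)]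

lemma integrableOn_indicator_roundingWindow (x : V → ℝ) (U : Finset V) (v : V) (C : ℝ) :
    IntegrableOn ((roundingWindow x U v).indicator fun _ => C) (Set.Ioc 0 (1 / 2)) :=
  (integrableOn_const measure_Ioc_lt_top.ne).indicator (measurableSet_roundingWindow x U v)

variable [Fintype V]

structure IsFracColoring (G : SimpleGraph V) (y : Finset V → ℝ) : Prop where
  nonneg : ∀ U, 0 ≤ y U
  isIndep : ∀ U, y U ≠ 0 → IsIndep G ↑U
  one_le_sum : ∀ v, 1 ≤ ∑ U : Finset V, if v ∈ U then y U else 0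

lemma fracChrom_eq_sInf (G : SimpleGraph V) :
    fracChrom G = sInf {s | ∃ y, IsFracColoring G y ∧ s = ∑ U : Finset V, y U} := by
  unfold fracChrom fracChromOn
  congr 1
  ext s
  constructor
  · rintro ⟨y, hy0, hyI, hy1, rfl⟩
    exact ⟨y, ⟨hy0, fun U hU => (hyI U hU).1, fun v => hy1 v trivial⟩, rfl⟩
  · rintro ⟨y, ⟨hy0, hyI, hy1⟩, rfl⟩
    exact ⟨y, hy0, fun U hU => ⟨hyI U hU, Set.subset_univ _⟩, fun v _ => hy1 v, rfl⟩

lemma isFracColoring_singletons (G : SimpleGraph V) :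
    IsFracColoring G fun U => if U.card = 1 then 1 else 0 := by
  refine ⟨fun U => by positivity, fun U hU => ?_, fun v => ?_⟩
  · obtain ⟨v, rfl⟩ := card_eq_one.1 (by simpa using hU)
    simp [IsIndep]
  · refine le_trans ?_ (single_le_sum (fun U _ => by positivity) (mem_univ {v}))
    simp

lemma IsFracColoring.two_le_sum {y : Finset V → ℝ} (hy : IsFracColoring G y) {u v : V}
    (huv : G.Adj u v) : 2 ≤ ∑ U : Finset V, y U := by
  have hU : ∀ U : Finset V,
      (if u ∈ U then y U else 0) + (if v ∈ U then y U else 0) ≤ y U := by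
    intro U
    by_cases h0 : y U = 0
    · simp [h0]
    by_cases hu : u ∈ U <;> by_cases hv : v ∈ U
    · exact (hy.isIndep U h0 hu hv huv).elim
    all_goals simp [hu, hv, hy.nonneg U]
  calc (2 : ℝ) = 1 + 1 := by norm_num
    _ ≤ _ := add_le_add (hy.one_le_sum u) (hy.one_le_sum v)
    _ ≤ _ := by rw [← sum_add_distrib]; exact sum_le_sum fun U _ => hU U

noncomputable def thresholdCover (x : V → ℝ) (U : Finset V) (t : ℝ) : Finset V :=
  {v | if v ∈ U then 1 - t < x v else t ≤ x v}

lemma mem_thresholdCover {x : V → ℝ} {U : Finset V} {t : ℝ} {v : V} :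
    v ∈ thresholdCover x U t ↔ t ∈ roundingWindow x U v := by
  unfold thresholdCover roundingWindow
  split_ifs <;> simp [*, sub_lt_comm]

lemma isVC_thresholdCover {x : V → ℝ} (hx : x ∈ lpPoly G) {U : Finset V} (hU : IsIndep G ↑U)
    {t : ℝ} (ht : t ≤ 1 / 2) :
    IsVC G ↑(thresholdCover x U t) := by
  have hedge : ∀ ⦃u v⦄, G.Adj u v → u ∉ U →
      t ∈ roundingWindow x U u ∨ t ∈ roundingWindow x U v := by
    intro u v huv hu
    have hsum := hx.2 huv
    simp only [roundingWindow, hu, if_false, Set.mem_Iic]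
    by_cases hv : v ∈ U <;> simp only [hv, if_true, if_false, Set.mem_Ioi, Set.mem_Iic] <;>
      by_contra! h <;> linarith
  intro u v huv
  simp only [mem_coe, mem_thresholdCover]
  by_cases hu : u ∈ U
  · exact (hedge huv.symm fun hv => hU hu hv huv).symm
  · exact hedge huv hu

lemma sum_thresholdCover_eq (c x : V → ℝ) (U : Finset V) (t : ℝ) :
    ∑ v ∈ thresholdCover x U t, c v =
      ∑ v, (roundingWindow x U v).indicator (fun _ => c v) t := by
  classical
  simp_rw [Set.indicator_apply, ← mem_thresholdCover, sum_ite_mem, univ_inter]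

lemma integrableOn_sum_thresholdCover (c x : V → ℝ) (U : Finset V) :
    IntegrableOn (fun t => ∑ v ∈ thresholdCover x U t, c v) (Set.Ioc 0 (1 / 2)) := by
  simp_rw [sum_thresholdCover_eq]
  exact integrable_finsetSum _ fun v _ =>
    integrableOn_indicator_roundingWindow x U v (c v)

lemma integral_sum_thresholdCover (c x : V → ℝ) (U : Finset V) :
    ∫ t in Set.Ioc 0 (1 / 2), ∑ v ∈ thresholdCover x U t, c v =
      ∑ v, volume.real (Set.Ioc 0 (1 / 2) ∩ roundingWindow x U v) * c v := by
  simp_rw [sum_thresholdCover_eq]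
  rw [integral_finsetSum _ fun v _ =>
    integrableOn_indicator_roundingWindow x U v (c v)]
  refine sum_congr rfl fun v _ => ?_
  rw [setIntegral_indicator (measurableSet_roundingWindow x U v), setIntegral_const, smul_eq_mul]

lemma IsFracColoring.sum_mul_volume_roundingWindow_le {y : Finset V → ℝ}
    (hy : IsFracColoring G y) (hs : 2 ≤ ∑ U : Finset V, y U)
    {x : V → ℝ} {v : V} (hx0 : 0 ≤ x v) (hx1 : x v ≤ 1) :
    ∑ U : Finset V, y U * volume.real (Set.Ioc 0 (1 / 2) ∩ roundingWindow x U v) ≤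
      (∑ U : Finset V, y U - 1) * x v := by
  set p := ∑ U : Finset V, if v ∈ U then y U else 0
  have hsplit : ∑ U : Finset V, y U * volume.real (Set.Ioc 0 (1 / 2) ∩ roundingWindow x U v) =
      (∑ U : Finset V, y U - p) * min (1 / 2) (x v) + p * max (x v - 1 / 2) 0 := by
    simp_rw [volume_real_Ioc_inter_roundingWindow _ hx0 hx1, p, ← sum_sub_distrib,
      sum_mul, ← sum_add_distrib]
    refine sum_congr rfl fun U _ => ?_
    split_ifs <;> ring
  rw [hsplit]
  exact sub_mul_min_add_mul_max_le hx0 hx1 (hy.one_le_sum v) hs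

lemma IsFracColoring.exists_isVC_sum_le {y : Finset V → ℝ}
    (hy : IsFracColoring G y) (hs : 2 ≤ ∑ U : Finset V, y U) {c : V → ℝ}
    (hc : ∀ v, 0 ≤ c v) {x : V → ℝ} (hx : x ∈ lpPoly G) (hx1 : ∀ v, x v ≤ 1) :
    ∃ S : Finset V, IsVC G ↑S ∧
      ∑ v ∈ S, c v ≤ (2 - 2 / ∑ U : Finset V, y U) * ∑ v, c v * x v := by
  set s := ∑ U : Finset V, y U
  set X := ∑ v, c v * x v
  set I : Finset V → ℝ := fun U =>
    ∫ t in Set.Ioc 0 (1 / 2), ∑ v ∈ thresholdCover x U t, c v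
  have hI : ∑ U : Finset V, y U * I U ≤ s * ((s - 1) * X / s) := by
    calc ∑ U : Finset V, y U * I U
        = ∑ v, c v *
            ∑ U : Finset V, y U * volume.real (Set.Ioc 0 (1 / 2) ∩ roundingWindow x U v) := by
          simp_rw [I, integral_sum_thresholdCover, mul_sum]
          rw [sum_comm]
          exact sum_congr rfl fun v _ => sum_congr rfl fun U _ => by ring
      _ ≤ ∑ v, c v * ((s - 1) * x v) := sum_le_sum fun v _ =>
          mul_le_mul_of_nonneg_left
            (hy.sum_mul_volume_roundingWindow_le hs (hx.1 v) (hx1 v)) (hc v)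
      _ = s * ((s - 1) * X / s) := by
          rw [mul_div_cancel₀ _ (by positivity), mul_sum]
          exact sum_congr rfl fun v _ => by ring
  obtain ⟨U, -, hyU, hIU⟩ := Finset.exists_ne_zero_le_of_sum_mul_le (fun U _ => hy.nonneg U)
    (by positivity) hI
  obtain ⟨t, ht, hcost⟩ := exists_le_setAverage (by simp) measure_Ioc_lt_top.ne
    (integrableOn_sum_thresholdCover c x U)
  refine ⟨thresholdCover x U t, isVC_thresholdCover hx (hy.isIndep U hyU) ht.2, ?_⟩
  calc ∑ v ∈ thresholdCover x U t, c v ≤ 2 * I U := by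
        simpa [I, setAverage_eq, Real.volume_real_Ioc] using hcost
    _ ≤ 2 * ((s - 1) * X / s) := by linarith
    _ = (2 - 2 / s) * X := by field_simp

lemma IsFracColoring.ipVal_le {y : Finset V → ℝ}
    (hy : IsFracColoring G y) (hs : 2 ≤ ∑ U : Finset V, y U) {c : V → ℝ}
    (hc : ∀ v, 0 ≤ c v) {x : V → ℝ} (hx : x ∈ lpPoly G) :
    ipVal G c ≤ (2 - 2 / ∑ U : Finset V, y U) * ∑ v, c v * x v := by
  obtain ⟨S, hS, hcost⟩ :=
    hy.exists_isVC_sum_le hs hc (min_one_mem_lpPoly hx) fun v => min_le_right _ _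
  have hk : 0 ≤ 2 - 2 / ∑ U : Finset V, y U := by
    rw [sub_nonneg, div_le_iff₀ (by positivity)]; linarith
  calc ipVal G c ≤ ∑ v ∈ S, c v :=
        csInf_le ⟨0, by rintro _ ⟨T, -, rfl⟩; exact sum_nonneg fun v _ => hc v⟩
          ⟨S, hS, rfl⟩
    _ ≤ _ := hcost
    _ ≤ _ := mul_le_mul_of_nonneg_left (sum_le_sum fun v _ =>
        mul_le_mul_of_nonneg_left (min_le_left _ _) (hc v)) hk

lemma IsFracColoring.ipVal_le_mul_lpVal {y : Finset V → ℝ}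
    (hy : IsFracColoring G y) (hs : 2 ≤ ∑ U : Finset V, y U) {c : V → ℝ}
    (hc : ∀ v, 0 ≤ c v) :
    ipVal G c ≤ (2 - 2 / ∑ U : Finset V, y U) * lpVal G c := by
  have hk : 0 < 2 - 2 / ∑ U : Finset V, y U := by
    rw [sub_pos, div_lt_iff₀ (by positivity)]; linarith
  rw [← div_le_iff₀' hk]
  refine le_csInf ⟨_, fun _ => 1, ⟨fun _ => zero_le_one, fun _ _ _ => by norm_num⟩, rfl⟩ ?_
  rintro _ ⟨x, hx, rfl⟩
  rw [div_le_iff₀' hk]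
  exact hy.ipVal_le hs hc hx

end

/-- Upper bound direction: the minimum cost of an integral vertex cover is at most
`(2 - 2/χ^f(G))` times the optimal LP value. -/
theorem stmt5 {V : Type*} [Fintype V] [DecidableEq V] (G : SimpleGraph V)
    (hE : ∃ u v, G.Adj u v)
    (c : V → ℝ) (hc : ∀ v, 0 ≤ c v) :
    ipVal G c ≤ (2 - 2 / fracChrom G) * lpVal G c := by
  obtain ⟨u, v, huv⟩ := hE
  let T : Set ℝ := Set.Ici 2 ∩ (fun s => (2 - 2 / s) * lpVal G c) ⁻¹' Set.Ici (ipVal G c)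
  have hT : {s | ∃ y, IsFracColoring G y ∧ s = ∑ U : Finset V, y U} ⊆ T := by
    rintro _ ⟨y, hy, rfl⟩
    exact ⟨hy.two_le_sum huv, hy.ipVal_le_mul_lpVal (hy.two_le_sum huv) hc⟩
  have hT_closed : IsClosed T :=
    ContinuousOn.preimage_isClosed_of_isClosed
      (by fun_prop (disch := intro s hs; exact (zero_lt_two.trans_le hs).ne'))
      isClosed_Ici isClosed_Ici
  rw [fracChrom_eq_sInf]
  exact (closure_minimal hT hT_closed <| csInf_mem_closure
    ⟨_, _, isFracColoring_singletons G, rfl⟩ ⟨2, fun s hs => (hT hs).1⟩).2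
end

section
/- Let Q ⊆ P ⊆ ℝ^n_{≥0} be blocking-type polyhedra (upward closed: x ∈ P and y ≥ x implies y ∈ P, and similarly for Q). Then sup over nonnegative c of min{c^T x : x ∈ Q}/min{c^T x : x ∈ P} equals min{ρ ≥ 0 : ρ·x ∈ Q for all x ∈ P}. -/
open Finset

/-- A set of the form `{x | A x ≥ b}` for finitely many linear inequalities. -/
def IsPolyhedron {n : ℕ} (P : Set (Fin n → ℝ)) : Prop :=
  ∃ (m : ℕ) (A : Fin m → Fin n → ℝ) (b : Fin m → ℝ),
    P = {x | ∀ i, b i ≤ ∑ j, A i j * x j}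

/-! If `ρ • P ⊆ Q`, every minimum over `Q` is at most `ρ` times the minimum over `P`, so every
ratio is at most `ρ`. Conversely, if `ρ • x₀ ∉ Q` for some `x₀ ∈ P`, then `ρ • x₀` violates a
defining inequality `β ≤ a ⬝ᵥ y` of `Q`, whose normal `a` is nonnegative because `Q` is upward
closed. For the cost `a + ε • 1` the minimum over `Q` is still at least `β`, while the minimum
over `P` is at most `a ⬝ᵥ x₀ + ε ∑ x₀`, so for small `ε > 0` the ratio exceeds `ρ`. The term
`ε • 1` keeps the minimum over `P` positive: when `0 ∉ P`, the coordinate sum is bounded away from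
`0` on the polyhedron `P`. When `0 ∈ P` no cost has a positive minimum over `P`, and both sides
are `0` (the `sSup` of the empty set). -/

open Set

theorem sSup_eq_sInf_of_forall_le_of_exists_gt {L R : Set ℝ} (hL : L.Nonempty)
    (hL0 : ∀ r ∈ L, 0 ≤ r) (hle : ∀ r ∈ L, ∀ ρ ∈ R, r ≤ ρ)
    (hgt : ∀ ρ, 0 ≤ ρ → ρ ∉ R → ∃ r ∈ L, ρ < r) : sSup L = sInf R := by
  rcases R.eq_empty_or_nonempty with rfl | hR
  · rw [Real.sInf_empty]
    refine Real.sSup_of_not_bddAbove fun ⟨u, hu⟩ => ?_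
    obtain ⟨r, hr, hlt⟩ := hgt (max u 0) (le_max_right _ _) (notMem_empty _)
    exact (hu hr).not_gt ((le_max_left _ _).trans_lt hlt)
  have hLbdd : BddAbove L := ⟨_, fun r hr => hle r hr _ hR.some_mem⟩
  have hRbdd : BddBelow R := ⟨_, fun ρ hρ => hle _ hL.some_mem ρ hρ⟩
  refine (csSup_le hL fun r hr => le_csInf hR (hle r hr)).antisymm (not_lt.1 fun hlt => ?_)
  obtain ⟨r, hr, hlt'⟩ := hgt (sSup L) ((hL0 _ hL.some_mem).trans (le_csSup hLbdd hL.some_mem))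
    fun h => (csInf_le hRbdd h).not_gt hlt
  exact (le_csSup hLbdd hr).not_gt hlt'

section

variable {ι : Type*} {P Q : Set (ι → ℝ)}

def scalings (P Q : Set (ι → ℝ)) : Set ℝ :=
  {ρ | 0 ≤ ρ ∧ ∀ x ∈ P, ρ • x ∈ Q}

theorem sInf_scalings_of_zero_mem (h0 : 0 ∈ P) : sInf (scalings P Q) = 0 := by
  rcases (scalings P Q).eq_empty_or_nonempty with h | ⟨ρ, -, hρ⟩
  · rw [h, Real.sInf_empty]
  · have h0Q : (0 : ι → ℝ) ∈ Q := by simpa using hρ 0 h0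
    exact IsLeast.csInf_eq ⟨⟨le_rfl, fun x _ => by simpa using h0Q⟩, fun _ h => h.1⟩

variable [Fintype ι] {S : Set (ι → ℝ)} {c : ι → ℝ}

noncomputable def minVal (S : Set (ι → ℝ)) (c : ι → ℝ) : ℝ :=
  sInf {t | ∃ x ∈ S, t = c ⬝ᵥ x}

def gapRatios (P Q : Set (ι → ℝ)) : Set ℝ :=
  {r | ∃ c : ι → ℝ, 0 ≤ c ∧ 0 < minVal P c ∧ r = minVal Q c / minVal P c}

theorem minVal_le (hS : S ⊆ Ici 0) (hc : 0 ≤ c) {x : ι → ℝ} (hx : x ∈ S) :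
    minVal S c ≤ c ⬝ᵥ x :=
  csInf_le ⟨0, by rintro _ ⟨y, hy, rfl⟩; exact dotProduct_nonneg_of_nonneg hc (hS hy)⟩ ⟨x, hx, rfl⟩

theorem le_minVal (hS : S.Nonempty) {a : ℝ} (h : ∀ x ∈ S, a ≤ c ⬝ᵥ x) : a ≤ minVal S c := by
  obtain ⟨x, hx⟩ := hS
  exact le_csInf ⟨_, x, hx, rfl⟩ (by rintro _ ⟨y, hy, rfl⟩; exact h y hy)

theorem minVal_nonneg (hS : S ⊆ Ici 0) (hc : 0 ≤ c) : 0 ≤ minVal S c := by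
  rcases S.eq_empty_or_nonempty with rfl | hne
  · simp [minVal]
  · exact le_minVal hne fun x hx => dotProduct_nonneg_of_nonneg hc (hS hx)

theorem minVal_le_mul_minVal (hP : P.Nonempty) (hQ : Q ⊆ Ici 0) (hc : 0 ≤ c) {ρ : ℝ}
    (hρ : ρ ∈ scalings P Q) : minVal Q c ≤ ρ * minVal P c := by
  obtain ⟨hρ0, hρPQ⟩ := hρ
  have hval : ∀ x ∈ P, minVal Q c ≤ ρ * (c ⬝ᵥ x) := fun x hx => by
    simpa [dotProduct_smul] using minVal_le hQ hc (hρPQ x hx)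
  rcases hρ0.eq_or_lt with rfl | hρpos
  · obtain ⟨x, hx⟩ := hP
    simpa using hval x hx
  · rw [← div_le_iff₀' hρpos]
    exact le_minVal hP fun x hx => (div_le_iff₀' hρpos).2 (hval x hx)

theorem le_of_mem_gapRatios_of_mem_scalings (hP : P.Nonempty) (hQ : Q ⊆ Ici 0) {r ρ : ℝ}
    (hr : r ∈ gapRatios P Q) (hρ : ρ ∈ scalings P Q) : r ≤ ρ := by
  obtain ⟨c, hc, hpos, rfl⟩ := hr
  exact (div_le_iff₀ hpos).2 (minVal_le_mul_minVal hP hQ hc hρ)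

theorem gapRatios_nonneg (hQ : Q ⊆ Ici 0) {r : ℝ} (hr : r ∈ gapRatios P Q) : 0 ≤ r := by
  obtain ⟨c, hc, hpos, rfl⟩ := hr
  exact div_nonneg (minVal_nonneg hQ hc) hpos.le

theorem gapRatios_eq_empty_of_zero_mem (hP : P ⊆ Ici 0) (h0 : 0 ∈ P) : gapRatios P Q = ∅ := by
  refine eq_empty_iff_forall_notMem.2 ?_
  rintro r ⟨c, hc, hpos, -⟩
  have := minVal_le hP hc h0
  rw [dotProduct_zero] at this
  linarith

theorem nonneg_of_isUpperSet_of_le_dotProduct (hS : IsUpperSet S) (hne : S.Nonempty)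
    {a : ι → ℝ} {β : ℝ} (hβ : ∀ x ∈ S, β ≤ a ⬝ᵥ x) : 0 ≤ a := by
  classical
  intro j
  by_contra! hj
  replace hj : 0 < -a j := neg_pos.2 hj
  obtain ⟨y, hy⟩ := hne
  have hy' := hβ y hy
  -- moving `y` far enough along the `j`-th axis pushes `a ⬝ᵥ ·` below `β`
  set t := (a ⬝ᵥ y - β + 1) / -a j
  have ht : -a j * t = a ⬝ᵥ y - β + 1 := mul_div_cancel₀ _ hj.ne'
  have hmem : y + Pi.single j t ∈ S :=
    hS (le_add_of_nonneg_right (Pi.single_nonneg.2 (div_nonneg (by linarith) hj.le))) hy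
  have := hβ _ hmem
  rw [dotProduct_add, dotProduct_single] at this
  linarith

theorem nonneg_of_isUpperSet_of_eq_setOf {κ : Type*} {A : κ → ι → ℝ} {b : κ → ℝ}
    (hS : S = {x | ∀ i, b i ≤ A i ⬝ᵥ x}) (hup : IsUpperSet S) (hne : S.Nonempty) (i : κ) :
    0 ≤ A i :=
  nonneg_of_isUpperSet_of_le_dotProduct hup hne fun x hx => by rw [hS] at hx; exact hx i

theorem exists_pos_le_sum_of_zero_notMem {κ : Type*} {A : κ → ι → ℝ} {b : κ → ℝ}
    (hP : P = {x | ∀ i, b i ≤ A i ⬝ᵥ x}) (hA : ∀ i, 0 ≤ A i) (hP0 : P ⊆ Ici 0) (h0 : 0 ∉ P) :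
    ∃ δ > 0, ∀ x ∈ P, δ ≤ ∑ j, x j := by
  subst hP
  obtain ⟨i, hi⟩ : ∃ i, 0 < b i := by simpa using h0
  set M := ∑ j, A i j
  have hM : 0 ≤ M := sum_nonneg fun j _ => hA i j
  refine ⟨b i / (M + 1), div_pos hi (by linarith), fun x hx => ?_⟩
  have hx0 : 0 ≤ x := hP0 hx
  have hAx : A i ⬝ᵥ x ≤ M * ∑ j, x j := by
    rw [mul_sum]
    exact sum_le_sum fun j _ =>
      mul_le_mul_of_nonneg_right (single_le_sum (fun k _ => hA i k) (mem_univ j)) (hx0 j)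
  have hsum : 0 ≤ ∑ j, x j := sum_nonneg fun j _ => hx0 j
  rw [div_le_iff₀ (by linarith)]
  nlinarith [hx i]

theorem exists_gapRatios_gt {δ : ℝ} (hP0 : P ⊆ Ici 0) (hδ : 0 < δ)
    (hδP : ∀ x ∈ P, δ ≤ ∑ j, x j) (hQne : Q.Nonempty) (hQ0 : Q ⊆ Ici 0) {a : ι → ℝ} {β : ℝ}
    (ha : 0 ≤ a) (hQa : ∀ y ∈ Q, β ≤ a ⬝ᵥ y) {x₀ : ι → ℝ} (hx₀ : x₀ ∈ P) {ρ : ℝ} (hρ : 0 ≤ ρ)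
    (hviol : ρ * (a ⬝ᵥ x₀) < β) : ∃ r ∈ gapRatios P Q, ρ < r := by
  set s := ∑ j, x₀ j
  have hs : 0 ≤ s := sum_nonneg fun j _ => hP0 hx₀ j
  set ε := (β - ρ * (a ⬝ᵥ x₀)) / (ρ * s + 1)
  have hε : 0 < ε := div_pos (by linarith) (by positivity)
  have hεs : ε * (ρ * s + 1) = β - ρ * (a ⬝ᵥ x₀) := div_mul_cancel₀ _ (by positivity)
  set c := a + ε • 1
  have hc : 0 ≤ c := add_nonneg ha (smul_nonneg hε.le zero_le_one)
  have hcx : ∀ x, c ⬝ᵥ x = a ⬝ᵥ x + ε * ∑ j, x j := fun x => by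
    rw [add_dotProduct, smul_dotProduct, one_dotProduct, smul_eq_mul]
  have hPpos : 0 < minVal P c := by
    refine lt_of_lt_of_le (mul_pos hε hδ) (le_minVal ⟨x₀, hx₀⟩ fun x hx => ?_)
    rw [hcx]
    nlinarith [dotProduct_nonneg_of_nonneg ha (hP0 hx), hδP x hx]
  have hPle : minVal P c ≤ a ⬝ᵥ x₀ + ε * s := hcx x₀ ▸ minVal_le hP0 hc hx₀
  have hQge : β ≤ minVal Q c := le_minVal hQne fun y hy => by
    rw [hcx]
    nlinarith [hQa y hy, (sum_nonneg fun j _ => hQ0 hy j : 0 ≤ ∑ j, y j)]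
  refine ⟨_, ⟨c, hc, hPpos, rfl⟩, (lt_div_iff₀ hPpos).2 ?_⟩
  calc ρ * minVal P c ≤ ρ * (a ⬝ᵥ x₀ + ε * s) := mul_le_mul_of_nonneg_left hPle hρ
    _ < β := by linarith
    _ ≤ minVal Q c := hQge

end

/-- Goemans' strength-of-relaxation lemma for blocking-type polyhedra. -/
theorem stmt8 {n : ℕ} (P Q : Set (Fin n → ℝ))
    (hPpoly : IsPolyhedron P) (hQpoly : IsPolyhedron Q)
    (hQP : Q ⊆ P) (hQne : Q.Nonempty)
    (hPpos : ∀ x ∈ P, ∀ j, 0 ≤ x j)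
    (hPup : ∀ x ∈ P, ∀ y : Fin n → ℝ, (∀ j, x j ≤ y j) → y ∈ P)
    (hQup : ∀ x ∈ Q, ∀ y : Fin n → ℝ, (∀ j, x j ≤ y j) → y ∈ Q) :
    sSup {r | ∃ c : Fin n → ℝ, (∀ j, 0 ≤ c j) ∧
        0 < sInf {t | ∃ x ∈ P, t = ∑ j, c j * x j} ∧
        r = sInf {t | ∃ x ∈ Q, t = ∑ j, c j * x j} /
            sInf {t | ∃ x ∈ P, t = ∑ j, c j * x j}} =
      sInf {ρ : ℝ | 0 ≤ ρ ∧ ∀ x ∈ P, ρ • x ∈ Q} := by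
  change sSup (gapRatios P Q) = sInf (scalings P Q)
  obtain ⟨_, AP, bP, hPeq⟩ := hPpoly
  obtain ⟨_, AQ, bQ, hQeq⟩ := hQpoly
  replace hPeq : P = {x | ∀ i, bP i ≤ AP i ⬝ᵥ x} := hPeq
  replace hQeq : Q = {x | ∀ i, bQ i ≤ AQ i ⬝ᵥ x} := hQeq
  have hPne : P.Nonempty := hQne.mono hQP
  have hP0 : P ⊆ Ici 0 := hPpos
  have hQ0 : Q ⊆ Ici 0 := hQP.trans hP0
  by_cases h0 : (0 : Fin n → ℝ) ∈ P
  · rw [gapRatios_eq_empty_of_zero_mem hP0 h0, Real.sSup_empty, sInf_scalings_of_zero_mem h0]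
  have hAP := nonneg_of_isUpperSet_of_eq_setOf hPeq (fun x y hxy hx => hPup x hx y hxy) hPne
  have hAQ := nonneg_of_isUpperSet_of_eq_setOf hQeq (fun x y hxy hx => hQup x hx y hxy) hQne
  obtain ⟨δ, hδ, hδP⟩ := exists_pos_le_sum_of_zero_notMem hPeq hAP hP0 h0
  have hP1 : 0 < minVal P 1 :=
    hδ.trans_le (le_minVal hPne fun x hx => (one_dotProduct x).symm ▸ hδP x hx)
  refine sSup_eq_sInf_of_forall_le_of_exists_gt ⟨_, 1, zero_le_one, hP1, rfl⟩
    (fun _ => gapRatios_nonneg hQ0) (fun _ hr _ => le_of_mem_gapRatios_of_mem_scalings hPne hQ0 hr)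
    fun ρ hρ hρR => ?_
  obtain ⟨x₀, hx₀, hviol⟩ : ∃ x ∈ P, ρ • x ∉ Q := by
    by_contra! h
    exact hρR ⟨hρ, h⟩
  rw [hQeq] at hviol
  obtain ⟨i, hi⟩ := not_forall.1 hviol
  rw [not_le, dotProduct_smul, smul_eq_mul] at hi
  exact exists_gapRatios_gt hP0 hδ hδP hQne hQ0 (hAQ i)
    (fun y hy => by rw [hQeq] at hy; exact hy i) hx₀ hρ hi
end
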